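/- arXiv:2407.15084 — 2 statements merged into one kernel-verified Lean document; each statement's English description precedes it below -/
import Mathlib

section
/- Let p ≥ 2, let Σ ∈ ℝ^{p×p} be symmetric positive semidefinite, and let Σ̂ and Σ̃ be random p×p matrices on a probability space such that almost surely Σ̃ is symmetric positive semidefinite and ‖Σ̃ − Σ̂‖_max ≤ ‖K − Σ̂‖_max for every symmetric positive semidefinite K ∈ ℝ^{p×p}. Let D^p denote the p×(p−1) matrix (I_{p−1}, −1_{p−1})ᵀ, and set Σ̃^p = (D^p)ᵀ Σ̃ D^p, Σ^p = (D^p)ᵀ Σ D^p. Then for every ε > 0, P(‖Σ̃^p − Σ^p‖_max ≥ ε) ≤ p² · max_{k,l ∈ {1,…,p}} P(|Σ̂_{kl} − Σ_{kl}| ≥ ε/8). -/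
/-! Every column of `D^p` has absolute sum 2, so conjugation by `D^p` enlarges the max norm at
most 4-fold; and since `Σ` is itself positive semidefinite, the max-norm projection `Σ̃` lies
within `2 ‖Σ̂ − Σ‖_max` of `Σ`. Hence `‖Σ̃^p − Σ^p‖_max ≥ ε` forces `|Σ̂_{kl} − Σ_{kl}| ≥ ε/8` for
some entry, and a union bound over the `p²` entries gives the estimate. -/

open Matrix MeasureTheory
open scoped BigOperators ENNReal

/-- The `p × (p−1)` matrix `D^p = (I_{p−1}, −1_{p−1})ᵀ`. -/
def Dmat (p : ℕ) : Matrix (Fin p) (Fin (p - 1)) ℝ := fun i j =>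
  if (i : ℕ) = (j : ℕ) then 1 else if (i : ℕ) = p - 1 then -1 else 0

/-- The entrywise maximum (absolute value) norm of a matrix. -/
noncomputable def maxNorm {m n : Type*} [Fintype m] [Fintype n]
    (M : Matrix m n ℝ) : ℝ :=
  ⨆ i, ⨆ j, |M i j|

section maxNorm

open scoped Matrix.Norms.Elementwise

variable {m n : Type*} [Fintype m] [Fintype n]

theorem abs_le_maxNorm (M : Matrix m n ℝ) (i : m) (j : n) : |M i j| ≤ maxNorm M :=
  (le_ciSup (Set.finite_range _).bddAbove j).trans
    (le_ciSup (f := fun i => ⨆ j, |M i j|) (Set.finite_range _).bddAbove i)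

theorem maxNorm_nonneg (M : Matrix m n ℝ) : 0 ≤ maxNorm M :=
  Real.iSup_nonneg fun _ => Real.iSup_nonneg fun _ => abs_nonneg _

theorem maxNorm_eq_norm (M : Matrix m n ℝ) : maxNorm M = ‖M‖ := by
  refine le_antisymm ?_ ((norm_le_iff (maxNorm_nonneg M)).2 fun i j => abs_le_maxNorm M i j)
  exact Real.iSup_le (fun i => Real.iSup_le (fun j => norm_entry_le_entrywise_sup_norm M)
    (norm_nonneg M)) (norm_nonneg M)

theorem maxNorm_le {M : Matrix m n ℝ} {c : ℝ} (hc : 0 ≤ c) (h : ∀ i j, |M i j| ≤ c) :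
    maxNorm M ≤ c := by
  rw [maxNorm_eq_norm]
  exact (norm_le_iff hc).2 h

theorem exists_le_abs_of_le_maxNorm {M : Matrix m n ℝ} {c : ℝ} (hc : 0 < c)
    (h : c ≤ maxNorm M) : ∃ i j, c ≤ |M i j| := by
  by_contra! hlt
  rw [maxNorm_eq_norm] at h
  exact h.not_gt ((norm_lt_iff hc).2 hlt)

theorem maxNorm_sub_comm (A B : Matrix m n ℝ) : maxNorm (A - B) = maxNorm (B - A) := by
  simp only [maxNorm_eq_norm, norm_sub_rev]

theorem maxNorm_sub_le_two_mul_of_le {T S K : Matrix m n ℝ}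
    (hT : maxNorm (T - S) ≤ maxNorm (K - S)) : maxNorm (T - K) ≤ 2 * maxNorm (S - K) := by
  rw [maxNorm_sub_comm K S] at hT
  simp only [maxNorm_eq_norm] at hT ⊢
  linarith [norm_sub_le_norm_sub_add_norm_sub T S K]

end maxNorm

theorem abs_transpose_mul_mul_apply_le {m n k l : Type*} [Fintype m] [Fintype n]
    (A : Matrix m k ℝ) (M : Matrix m n ℝ) (B : Matrix n l ℝ) (j : k) (j' : l) :
    |(Aᵀ * M * B) j j'| ≤ (∑ i, |A i j|) * (∑ i', |B i' j'|) * maxNorm M := by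
  have expand : (Aᵀ * M * B) j j' = ∑ i, ∑ i', A i j * M i i' * B i' j' := by
    simp only [mul_apply, transpose_apply, Finset.sum_mul]
    exact Finset.sum_comm
  calc |(Aᵀ * M * B) j j'|
      ≤ ∑ i, ∑ i', |A i j| * |B i' j'| * maxNorm M := by
        rw [expand]
        refine (Finset.abs_sum_le_sum_abs _ _).trans (Finset.sum_le_sum fun i _ => ?_)
        refine (Finset.abs_sum_le_sum_abs _ _).trans (Finset.sum_le_sum fun i' _ => ?_)
        rw [abs_mul, abs_mul, mul_right_comm]
        gcongr
        exact abs_le_maxNorm M i i'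
    _ = (∑ i, |A i j|) * (∑ i', |B i' j'|) * maxNorm M := by
        rw [Finset.sum_mul_sum]
        simp only [Finset.sum_mul]

theorem sum_abs_Dmat_apply (p : ℕ) (j : Fin (p - 1)) : ∑ i, |Dmat p i j| = 2 := by
  obtain _ | q := p
  · exact j.elim0
  obtain ⟨j, hj⟩ := j
  have hjq : j < q := by omega
  have hne : ∀ x : Fin q, (x : ℕ) ≠ q := fun x => x.isLt.ne
  have heq : ∀ x : Fin q, (x : ℕ) = j ↔ x = ⟨j, hjq⟩ := fun x => by rw [Fin.ext_iff]
  rw [Fin.sum_univ_castSucc]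
  norm_num [Dmat, hjq.ne', hne, heq, apply_ite]

theorem maxNorm_Dmat_conj_sub_le (p : ℕ) (A B : Matrix (Fin p) (Fin p) ℝ) :
    maxNorm ((Dmat p)ᵀ * A * Dmat p - (Dmat p)ᵀ * B * Dmat p) ≤ 4 * maxNorm (A - B) := by
  rw [← Matrix.sub_mul, ← Matrix.mul_sub]
  refine maxNorm_le (by linarith [maxNorm_nonneg (A - B)]) fun j j' => ?_
  have := abs_transpose_mul_mul_apply_le (Dmat p) (A - B) (Dmat p) j j'
  rwa [sum_abs_Dmat_apply, sum_abs_Dmat_apply, show (2 : ℝ) * 2 = 4 by norm_num] at this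

theorem exists_le_abs_sub_of_le_maxNorm_Dmat_conj_sub {p : ℕ}
    {Sig Sighat Sigtil : Matrix (Fin p) (Fin p) ℝ}
    (hproj : maxNorm (Sigtil - Sighat) ≤ maxNorm (Sig - Sighat)) {ε : ℝ} (hε : 0 < ε)
    (h : ε ≤ maxNorm ((Dmat p)ᵀ * Sigtil * Dmat p - (Dmat p)ᵀ * Sig * Dmat p)) :
    ∃ k l, ε / 8 ≤ |Sighat k l - Sig k l| :=
  exists_le_abs_of_le_maxNorm (M := Sighat - Sig) (by positivity)
    (by linarith [maxNorm_Dmat_conj_sub_le p Sigtil Sig, maxNorm_sub_le_two_mul_of_le hproj])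

theorem psd_projection_logratio_tail_bound_general
    {Ω : Type*} [MeasurableSpace Ω] (μ : Measure Ω)
    (p : ℕ)
    (Sig : Matrix (Fin p) (Fin p) ℝ) (hSig : Sig.PosSemidef)
    (Sighat Sigtil : Ω → Matrix (Fin p) (Fin p) ℝ)
    (hAS : ∀ᵐ ω ∂μ, (Sigtil ω).PosSemidef ∧
      ∀ K : Matrix (Fin p) (Fin p) ℝ, K.PosSemidef →
        maxNorm (Sigtil ω - Sighat ω) ≤ maxNorm (K - Sighat ω)) :
    ∀ ε : ℝ, 0 < ε →
      μ {ω | ε ≤ maxNorm ((Dmat p)ᵀ * Sigtil ω * Dmat p - (Dmat p)ᵀ * Sig * Dmat p)}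
        ≤ (p : ℝ≥0∞) ^ 2 * ⨆ k : Fin p, ⨆ l : Fin p,
            μ {ω | ε / 8 ≤ |Sighat ω k l - Sig k l|} := by
  intro ε hε
  set tail : Fin p → Fin p → Set Ω := fun k l => {ω | ε / 8 ≤ |Sighat ω k l - Sig k l|}
  calc μ {ω | ε ≤ maxNorm ((Dmat p)ᵀ * Sigtil ω * Dmat p - (Dmat p)ᵀ * Sig * Dmat p)}
      ≤ μ (⋃ k, ⋃ l, tail k l) := by
        refine measure_mono_ae ?_
        filter_upwards [hAS] with ω hω hE
        exact Set.mem_iUnion₂.2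
          (exists_le_abs_sub_of_le_maxNorm_Dmat_conj_sub (hω.2 Sig hSig) hε hE)
    _ ≤ ∑ k, ∑ l, μ (tail k l) :=
        (measure_iUnion_fintype_le _ _).trans
          (Finset.sum_le_sum fun k _ => measure_iUnion_fintype_le _ _)
    _ ≤ ∑ _k : Fin p, ∑ _l : Fin p, ⨆ k, ⨆ l, μ (tail k l) := by
        gcongr with k _ l _
        exact le_iSup₂ (f := fun k l => μ (tail k l)) k l
    _ = (p : ℝ≥0∞) ^ 2 * ⨆ k, ⨆ l, μ (tail k l) := by
        simp only [Finset.sum_const, Finset.card_univ, Fintype.card_fin, nsmul_eq_mul]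
        ring

/-- If `Σ̃` is (almost surely) the positive semidefinite projection of the random matrix `Σ̂`
in the max norm, and `Σ` is positive semidefinite, then for every `ε > 0`,
`P(‖Σ̃^p − Σ^p‖_max ≥ ε) ≤ p² max_{k,l} P(|Σ̂_{kl} − Σ_{kl}| ≥ ε/8)`, where
`Σ̃^p = (D^p)ᵀ Σ̃ D^p` and `Σ^p = (D^p)ᵀ Σ D^p`. -/
theorem psd_projection_logratio_tail_bound
    {Ω : Type*} [MeasurableSpace Ω] (μ : Measure Ω) [IsProbabilityMeasure μ]
    (p : ℕ) (hp : 2 ≤ p)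
    (Sig : Matrix (Fin p) (Fin p) ℝ) (hSig : Sig.PosSemidef)
    (Sighat Sigtil : Ω → Matrix (Fin p) (Fin p) ℝ)
    (hAS : ∀ᵐ ω ∂μ, (Sigtil ω).PosSemidef ∧
      ∀ K : Matrix (Fin p) (Fin p) ℝ, K.PosSemidef →
        maxNorm (Sigtil ω - Sighat ω) ≤ maxNorm (K - Sighat ω)) :
    ∀ ε : ℝ, 0 < ε →
      μ {ω | ε ≤ maxNorm ((Dmat p)ᵀ * Sigtil ω * Dmat p - (Dmat p)ᵀ * Sig * Dmat p)}
        ≤ (p : ℝ≥0∞) ^ 2 * ⨆ k : Fin p, ⨆ l : Fin p,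
            μ {ω | ε / 8 ≤ |Sighat ω k l - Sig k l|} :=
  psd_projection_logratio_tail_bound_general μ p Sig hSig Sighat Sigtil hAS
end

section
/- Let n ≥ 1, p > s ≥ 2, and let X ∈ ℝ^{n×p} be a fixed matrix with columns X_1,…,X_p satisfying ‖X_j‖₂² ≤ n for all j. Let S ⊆ {1,…,p} with p ∈ S and |S| = s, let D denote the s×(s−1) matrix (I_{s−1}, −1_{s−1})ᵀ acting on the coordinates of S (with p as the last coordinate of S), and define the n×(s−1) matrix X^p_S whose columns are X_j − X_p for j ∈ S\{p}, and the n×(p−s) matrix X^p_{S^c} whose columns are X_j − X_p for j ∈ S^c. Assume Σ^p_{SS} = (1/n)(X^p_S)ᵀX^p_S is invertible and set Π = I_n − (1/n) X^p_S (Σ^p_{SS})⁻¹ (X^p_S)ᵀ. Let w be a random vector in ℝ^n with independent N(0, σ²) coordinates, σ > 0. Then for every λ > 0 and every ξ ∈ (0,1], P((1/n)‖(X^p_{S^c})ᵀ Π w‖_∞ > λξ/4) ≤ (p−s) · exp(−n λ² ξ² / (128 σ²)). -/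
/-!
Write `Y_j = ((X^p_{S^c})ᵀ Π w)_j = ⟨Π b_j, w⟩`, where `b_j = X_j - X_p` and `Π` is symmetric and
idempotent. A linear combination of independent centred Gaussians is a centred Gaussian, so `Y_j`
has variance `σ² ‖Π b_j‖² ≤ σ² ‖b_j‖² ≤ 4 n σ²`. The Gaussian tail
`P(|Z| > t) ≤ exp(-t² / (2 v))` (without the usual factor `2`, obtained from
`∫_t^∞ e^{-b x²} ≤ e^{-b t²} ∫_0^∞ e^{-b y²}`) at `t = n λ ξ / 4`, followed by a union bound over
the `p - s` columns of `S^c`, gives the claim.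
-/

open Matrix MeasureTheory ProbabilityTheory Real Set
open scoped ENNReal NNReal

lemma integral_Ioi_exp_neg_mul_sq_le {b t : ℝ} (hb : 0 < b) (ht : 0 ≤ t) :
    ∫ x in Ioi t, exp (-b * x ^ 2) ≤ exp (-b * t ^ 2) * (√(π / b) / 2) := by
  have hshift : ∫ x in Ioi t, exp (-b * x ^ 2) = ∫ y in Ioi 0, exp (-b * (y + t) ^ 2) := by
    rw [← (measurePreserving_add_right volume t).setIntegral_preimage_emb
      (measurableEmbedding_addRight t), preimage_add_const_Ioi, sub_self]
  have hg : Integrable fun y : ℝ => exp (-b * y ^ 2) := integrable_exp_neg_mul_sq hb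
  rw [hshift, ← integral_gaussian_Ioi, ← integral_const_mul]
  refine setIntegral_mono_on (hg.comp_add_right t).integrableOn (hg.const_mul _).integrableOn
    measurableSet_Ioi fun y hy => ?_
  -- `(y + t)² ≥ y² + t²` for `y, t ≥ 0`
  rw [← exp_add, exp_le_exp]
  nlinarith [mul_nonneg (mem_Ioi.mp hy).le ht]

lemma gaussianReal_Ioi_le {v : ℝ≥0} (hv : v ≠ 0) {t : ℝ} (ht : 0 ≤ t) :
    gaussianReal 0 v (Ioi t) ≤ ENNReal.ofReal (exp (-t ^ 2 / (2 * v)) / 2) := by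
  have hv' : (0 : ℝ) < v := by positivity
  have hpdf : gaussianPDFReal 0 v = fun x => (√(2 * π * v))⁻¹ * exp (-(2 * v : ℝ)⁻¹ * x ^ 2) := by
    ext x
    simp only [gaussianPDFReal, sub_zero, div_eq_inv_mul, neg_mul, mul_neg]
  rw [gaussianReal_apply_eq_integral 0 hv, hpdf, integral_const_mul]
  refine ENNReal.ofReal_le_ofReal ?_
  calc (√(2 * π * v))⁻¹ * ∫ x in Ioi t, exp (-(2 * v : ℝ)⁻¹ * x ^ 2)
      ≤ (√(2 * π * v))⁻¹ * (exp (-(2 * v : ℝ)⁻¹ * t ^ 2) * (√(π / (2 * v : ℝ)⁻¹) / 2)) :=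
        mul_le_mul_of_nonneg_left (integral_Ioi_exp_neg_mul_sq_le (by positivity) ht)
          (by positivity)
    _ = exp (-t ^ 2 / (2 * v)) / 2 := by
        rw [div_inv_eq_mul, mul_comm π]
        field_simp

lemma gaussianReal_abs_gt_le {v : ℝ≥0} {V t : ℝ} (hvV : (v : ℝ) ≤ V) (ht : 0 ≤ t) :
    gaussianReal 0 v {x | t < |x|} ≤ ENNReal.ofReal (exp (-t ^ 2 / (2 * V))) := by
  rcases eq_or_ne v 0 with rfl | hv
  · have : (0 : ℝ) ∉ {x : ℝ | t < |x|} := by simpa using ht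
    simp [gaussianReal_zero_var, this]
  have hsplit : {x : ℝ | t < |x|} = Ioi t ∪ (fun x => -x) ⁻¹' Ioi t := by
    ext x
    simp [lt_abs, lt_neg]
  have hsymm : gaussianReal 0 v ((fun x => -x) ⁻¹' Ioi t) = gaussianReal 0 v (Ioi t) := by
    rw [← Measure.map_apply measurable_neg measurableSet_Ioi, gaussianReal_map_neg, neg_zero]
  have hvar : exp (-t ^ 2 / (2 * v)) ≤ exp (-t ^ 2 / (2 * V)) := by
    rw [exp_le_exp, neg_div, neg_div, neg_le_neg_iff]
    gcongr
  calc gaussianReal 0 v {x | t < |x|}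
      ≤ gaussianReal 0 v (Ioi t) + gaussianReal 0 v (Ioi t) := by
        rw [hsplit]; nth_rw 2 [← hsymm]; exact measure_union_le _ _
    _ ≤ ENNReal.ofReal (exp (-t ^ 2 / (2 * v)) / 2)
          + ENNReal.ofReal (exp (-t ^ 2 / (2 * v)) / 2) := by
        gcongr <;> exact gaussianReal_Ioi_le hv ht
    _ = ENNReal.ofReal (exp (-t ^ 2 / (2 * v))) := by
        rw [← ENNReal.ofReal_add (by positivity) (by positivity), add_halves]
    _ ≤ ENNReal.ofReal (exp (-t ^ 2 / (2 * V))) := ENNReal.ofReal_le_ofReal hvar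

section IndependentGaussians

variable {Ω ι : Type*} [MeasurableSpace Ω] {μ : Measure Ω} [IsProbabilityMeasure μ]
  {w : ι → Ω → ℝ} {v : ℝ≥0}

lemma map_sum_const_mul_eq_gaussianReal (hindep : iIndepFun w μ)
    (hw : ∀ i, μ.map (w i) = gaussianReal 0 v) (c : ι → ℝ) (s : Finset ι) :
    μ.map (fun ω => ∑ i ∈ s, c i * w i ω)
      = gaussianReal 0 ((∑ i ∈ s, c i ^ 2).toNNReal * v) := by
  classical
  have hw_meas : ∀ i, AEMeasurable (w i) μ := fun i =>
    .of_map_ne_zero (by rw [hw i]; exact IsProbabilityMeasure.ne_zero _)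
  induction s using Finset.induction_on with
  | empty => simp [gaussianReal_zero_var]
  | insert j s hj ih =>
    have hindep' : IndepFun (fun ω => ∑ i ∈ s, c i * w i ω) (fun ω => c j * w j ω) μ := by
      have := (hindep.comp (fun i x => c i * x) fun i => measurable_const_mul (c i))
        |>.indepFun_finsetSum_of_notMem₀ (fun i => (hw_meas i).const_mul (c i)) hj
      simpa [Finset.sum_fn, Function.comp_def] using this
    have hj_law : μ.map (fun ω => c j * w j ω) = gaussianReal 0 ((c j ^ 2).toNNReal * v) := by
      rw [← Function.comp_def (c j * ·), ← AEMeasurable.map_map_of_aemeasurable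
        (measurable_const_mul (c j)).aemeasurable (hw_meas j), hw j, gaussianReal_map_const_mul,
        mul_zero, Real.toNNReal_of_nonneg (sq_nonneg _)]
    rw [Finset.sum_insert hj, add_comm, Real.toNNReal_add (by positivity) (sq_nonneg _), add_mul,
      ← add_zero (0 : ℝ), ← gaussianReal_add_gaussianReal_of_indepFun hindep' ih hj_law]
    simp_rw [Finset.sum_insert hj, add_comm (c j * w j _)]
    rfl

lemma measure_abs_sum_mul_gt_le [Fintype ι] (hindep : iIndepFun w μ)
    (hw : ∀ i, μ.map (w i) = gaussianReal 0 v) (c : ι → ℝ) {V t : ℝ}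
    (hV : (∑ i, c i ^ 2) * v ≤ V) (ht : 0 ≤ t) :
    μ {ω | t < |∑ i, c i * w i ω|} ≤ ENNReal.ofReal (exp (-t ^ 2 / (2 * V))) := by
  have hlaw := map_sum_const_mul_eq_gaussianReal hindep hw c Finset.univ
  have hmeas : AEMeasurable (fun ω => ∑ i, c i * w i ω) μ :=
    .of_map_ne_zero (by rw [hlaw]; exact IsProbabilityMeasure.ne_zero _)
  change μ ((fun ω => ∑ i, c i * w i ω) ⁻¹' {x | t < |x|}) ≤ _
  rw [← Measure.map_apply_of_aemeasurable hmeas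
    (measurableSet_lt measurable_const measurable_abs), hlaw]
  refine gaussianReal_abs_gt_le ?_ ht
  rwa [NNReal.coe_mul, Real.coe_toNNReal _ (by positivity)]

end IndependentGaussians

section ResidualProjection

variable {m k : Type*} [Fintype m] [DecidableEq m] [Fintype k] [DecidableEq k]

lemma transpose_one_sub_smul_mul_inv_mul_transpose (A : Matrix m k ℝ) (c : ℝ) :
    (1 - c • (A * (c • (Aᵀ * A))⁻¹ * Aᵀ))ᵀ = 1 - c • (A * (c • (Aᵀ * A))⁻¹ * Aᵀ) := by
  rw [transpose_sub, transpose_one, transpose_smul, transpose_mul, transpose_mul,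
    transpose_transpose, transpose_nonsing_inv, transpose_smul, transpose_mul,
    transpose_transpose, Matrix.mul_assoc]

lemma isIdempotentElem_one_sub_smul_mul_inv_mul_transpose (A : Matrix m k ℝ) {c : ℝ}
    (hc : c ≠ 0) (hA : IsUnit (c • (Aᵀ * A)).det) :
    IsIdempotentElem (1 - c • (A * (c • (Aᵀ * A))⁻¹ * Aᵀ)) := by
  set G := c • (Aᵀ * A)
  have hAA : Aᵀ * A = c⁻¹ • G := by rw [smul_smul, inv_mul_cancel₀ hc, one_smul]
  refine IsIdempotentElem.one_sub ?_
  calc c • (A * G⁻¹ * Aᵀ) * (c • (A * G⁻¹ * Aᵀ))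
      = (c * c) • (A * G⁻¹ * (Aᵀ * A) * G⁻¹ * Aᵀ) := by
        simp only [smul_mul_smul, Matrix.mul_assoc]
    _ = (c * c * c⁻¹) • (A * (G⁻¹ * G * G⁻¹) * Aᵀ) := by
        rw [hAA]; simp only [Matrix.mul_smul, Matrix.smul_mul, smul_smul, Matrix.mul_assoc]
    _ = c • (A * G⁻¹ * Aᵀ) := by
        rw [nonsing_inv_mul _ hA, Matrix.one_mul, mul_inv_cancel_right₀ hc, Matrix.mul_assoc]

end ResidualProjection

lemma dotProduct_mulVec_self_le {n : Type*} [Fintype n] {P : Matrix n n ℝ} (hPt : Pᵀ = P)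
    (hP : IsIdempotentElem P) (u : n → ℝ) : P *ᵥ u ⬝ᵥ P *ᵥ u ≤ u ⬝ᵥ u := by
  -- `P u` is orthogonal to `u - P u`
  have hPu : P *ᵥ u ⬝ᵥ u = P *ᵥ u ⬝ᵥ P *ᵥ u := by
    rw [dotProduct_mulVec, ← mulVec_transpose, hPt, mulVec_mulVec, hP.eq]
  have := dotProduct_self_star_nonneg (u - P *ᵥ u)
  simp only [star_trivial, sub_dotProduct, dotProduct_sub, dotProduct_comm u] at this
  linarith

lemma mulVec_transpose_mul_apply {m n : Type*} [Fintype m] [Fintype n] {P : Matrix m m ℝ}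
    (hPt : Pᵀ = P) (B : Matrix m n ℝ) (x : m → ℝ) (j : n) :
    ((Bᵀ * P) *ᵥ x) j = (P *ᵥ fun i => B i j) ⬝ᵥ x := by
  rw [← mulVec_mulVec]
  change (fun i => B i j) ⬝ᵥ P *ᵥ x = _
  rw [dotProduct_mulVec, ← mulVec_transpose, hPt]

lemma sum_sub_sq_le {ι : Type*} (s : Finset ι) (a b : ι → ℝ) :
    ∑ i ∈ s, (a i - b i) ^ 2 ≤ 2 * ∑ i ∈ s, a i ^ 2 + 2 * ∑ i ∈ s, b i ^ 2 := by
  rw [Finset.mul_sum, Finset.mul_sum, ← Finset.sum_add_distrib]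
  exact Finset.sum_le_sum fun i _ => by nlinarith [sq_nonneg (a i + b i)]

lemma measure_lt_iSup_abs_le_sum {Ω ι : Type*} [MeasurableSpace Ω] [Fintype ι] (μ : Measure Ω)
    (f : ι → Ω → ℝ) {t : ℝ} (ht : 0 ≤ t) :
    μ {ω | t < ⨆ j, |f j ω|} ≤ ∑ j, μ {ω | t < |f j ω|} := by
  refine (measure_mono fun ω hω => ?_).trans (measure_iUnion_fintype_le μ _)
  by_contra h
  simp only [Set.mem_iUnion, Set.mem_ofPred_eq, not_exists, not_lt] at h
  exact not_le.mpr hω (Real.iSup_le h ht)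

theorem gaussian_projected_correlation_tail_general
    {Ω : Type*} [MeasurableSpace Ω] (μ : Measure Ω) [IsProbabilityMeasure μ]
    (n p s : ℕ) (hn : 1 ≤ n) (hsp : s < p)
    (X : Matrix (Fin n) (Fin p) ℝ)
    (hX : ∀ j : Fin p, ∑ i, (X i j) ^ 2 ≤ (n : ℝ))
    (plast : Fin p) (S : Finset (Fin p)) (hcard : S.card = s)
    -- the matrix of log-ratio columns `X_j − X_p` for `j ∈ S \ {p}`
    (XpS : Matrix (Fin n) ↥(S.erase plast) ℝ)
    -- the matrix of log-ratio columns `X_j − X_p` for `j ∈ S^c`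
    (XpSc : Matrix (Fin n) {j : Fin p // j ∉ S} ℝ)
    (hXpSc : ∀ i j, XpSc i j = X i j.1 - X i plast)
    (SigpSS : Matrix ↥(S.erase plast) ↥(S.erase plast) ℝ)
    (hSigpSS : SigpSS = (1 / (n : ℝ)) • (XpSᵀ * XpS))
    (hinv : IsUnit SigpSS.det)
    (Pi : Matrix (Fin n) (Fin n) ℝ)
    (hPi : Pi = 1 - (1 / (n : ℝ)) • (XpS * SigpSS⁻¹ * XpSᵀ))
    (σ : ℝ) (hσ : 0 < σ)
    (w : Fin n → Ω → ℝ)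
    (hindep : iIndepFun w μ)
    (hgauss : ∀ i : Fin n, μ.map (w i) = gaussianReal 0 (Real.toNNReal (σ ^ 2))) :
    ∀ lam : ℝ, 0 < lam → ∀ ξ : ℝ, 0 < ξ → ξ ≤ 1 →
      μ {ω | lam * ξ / 4 <
          (1 / (n : ℝ)) * ⨆ j : {j : Fin p // j ∉ S},
            |(XpScᵀ * Pi).mulVec (fun i => w i ω) j|}
        ≤ ENNReal.ofReal
            (((p : ℝ) - (s : ℝ)) * Real.exp (-(n * lam ^ 2 * ξ ^ 2) / (128 * σ ^ 2))) := by
  intro lam hlam ξ hξ _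
  have hn0 : (0 : ℝ) < n := by exact_mod_cast hn
  subst hSigpSS
  have hPt : Piᵀ = Pi := hPi ▸ transpose_one_sub_smul_mul_inv_mul_transpose XpS _
  have hP : IsIdempotentElem Pi :=
    hPi ▸ isIdempotentElem_one_sub_smul_mul_inv_mul_transpose XpS (by positivity) hinv
  set T : ℝ := n * (lam * ξ / 4)
  set c : {j : Fin p // j ∉ S} → Fin n → ℝ := fun j => Pi *ᵥ fun i => XpSc i j
  have hevent : {ω | lam * ξ / 4 < (1 / (n : ℝ)) * ⨆ j : {j : Fin p // j ∉ S},
        |(XpScᵀ * Pi).mulVec (fun i => w i ω) j|}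
      = {ω | T < ⨆ j, |∑ i, c j i * w i ω|} := by
    ext ω
    simp only [Set.mem_ofPred_eq, one_div, lt_inv_mul_iff₀ hn0, mulVec_transpose_mul_apply hPt]
    rfl
  have hvar : ∀ j, (∑ i, c j i ^ 2) * (σ ^ 2).toNNReal ≤ 4 * n * σ ^ 2 := by
    intro j
    have hcol : ∑ i, c j i ^ 2 ≤ 4 * n := calc
      ∑ i, c j i ^ 2 ≤ ∑ i, XpSc i j ^ 2 := by
        simpa [dotProduct, sq] using dotProduct_mulVec_self_le hPt hP fun i => XpSc i j
      _ ≤ 2 * ∑ i, X i j ^ 2 + 2 * ∑ i, X i plast ^ 2 := by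
        simpa only [hXpSc] using sum_sub_sq_le Finset.univ (fun i => X i j) (fun i => X i plast)
      _ ≤ 4 * n := by linarith [hX j, hX plast]
    rw [Real.coe_toNNReal _ (sq_nonneg σ)]
    nlinarith [sq_nonneg σ]
  have htail : ∀ j, μ {ω | T < |∑ i, c j i * w i ω|}
      ≤ ENNReal.ofReal (exp (-(n * lam ^ 2 * ξ ^ 2) / (128 * σ ^ 2))) := by
    intro j
    refine (measure_abs_sum_mul_gt_le hindep hgauss (c j) (hvar j) (by positivity)).trans_eq ?_
    congr 2
    field_simp
    ring
  rw [hevent]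
  calc _ ≤ ∑ j, μ {ω | T < |∑ i, c j i * w i ω|} := measure_lt_iSup_abs_le_sum _ _ (by positivity)
    _ ≤ ∑ _j : {j : Fin p // j ∉ S},
          ENNReal.ofReal (exp (-(n * lam ^ 2 * ξ ^ 2) / (128 * σ ^ 2))) :=
        Finset.sum_le_sum fun j _ => htail j
    _ = _ := by
        rw [Finset.sum_const, Finset.card_univ, Fintype.card_subtype_compl, Fintype.card_fin,
          Fintype.card_coe, hcard, nsmul_eq_mul, ← ENNReal.ofReal_natCast,
          ← ENNReal.ofReal_mul (Nat.cast_nonneg _), Nat.cast_sub hsp.le]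

/-- Gaussian tail bound for the out-of-support log-ratio columns correlated with the projected
noise: with `Π = I − (1/n) X^p_S (Σ^p_SS)⁻¹ (X^p_S)ᵀ` and i.i.d. `N(0,σ²)` noise `w`,
`P((1/n)‖(X^p_{S^c})ᵀ Π w‖_∞ > λξ/4) ≤ (p−s) exp(−n λ² ξ² / (128 σ²))`. -/
theorem gaussian_projected_correlation_tail
    {Ω : Type*} [MeasurableSpace Ω] (μ : Measure Ω) [IsProbabilityMeasure μ]
    (n p s : ℕ) (hn : 1 ≤ n) (hs : 2 ≤ s) (hsp : s < p)
    (X : Matrix (Fin n) (Fin p) ℝ)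
    (hX : ∀ j : Fin p, ∑ i, (X i j) ^ 2 ≤ (n : ℝ))
    (plast : Fin p) (hplast : (plast : ℕ) = p - 1)
    (S : Finset (Fin p)) (hpS : plast ∈ S) (hcard : S.card = s)
    -- the matrix of log-ratio columns `X_j − X_p` for `j ∈ S \ {p}`
    (XpS : Matrix (Fin n) ↥(S.erase plast) ℝ)
    (hXpS : ∀ i j, XpS i j = X i j.1 - X i plast)
    -- the matrix of log-ratio columns `X_j − X_p` for `j ∈ S^c`
    (XpSc : Matrix (Fin n) {j : Fin p // j ∉ S} ℝ)
    (hXpSc : ∀ i j, XpSc i j = X i j.1 - X i plast)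
    (SigpSS : Matrix ↥(S.erase plast) ↥(S.erase plast) ℝ)
    (hSigpSS : SigpSS = (1 / (n : ℝ)) • (XpSᵀ * XpS))
    (hinv : IsUnit SigpSS.det)
    (Pi : Matrix (Fin n) (Fin n) ℝ)
    (hPi : Pi = 1 - (1 / (n : ℝ)) • (XpS * SigpSS⁻¹ * XpSᵀ))
    (σ : ℝ) (hσ : 0 < σ)
    (w : Fin n → Ω → ℝ)
    (hindep : iIndepFun w μ)
    (hgauss : ∀ i : Fin n, μ.map (w i) = gaussianReal 0 (Real.toNNReal (σ ^ 2))) :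
    ∀ lam : ℝ, 0 < lam → ∀ ξ : ℝ, 0 < ξ → ξ ≤ 1 →
      μ {ω | lam * ξ / 4 <
          (1 / (n : ℝ)) * ⨆ j : {j : Fin p // j ∉ S},
            |(XpScᵀ * Pi).mulVec (fun i => w i ω) j|}
        ≤ ENNReal.ofReal
            (((p : ℝ) - (s : ℝ)) * Real.exp (-(n * lam ^ 2 * ξ ^ 2) / (128 * σ ^ 2))) :=
  gaussian_projected_correlation_tail_general μ n p s hn hsp X hX plast S hcard XpS XpSc hXpSc
    SigpSS hSigpSS hinv Pi hPi σ hσ w hindep hgauss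
end
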